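/- Let p be an odd prime. For every integer t ≥ 1, setting m = p + p² + ⋯ + p^{2t+1} = Σ_{j=1}^{2t+1} p^j, one has N(m, 3t+2) ≥ C(2t+1, t) ≥ 2^t, where C(·,·) is the binomial coefficient. In particular, the sequence (max_{m∈ℕ} N(m,n))_{n≥1} grows at least exponentially in n. -/

import Mathlib

/-- The set `S_r(m,n)` of solutions of the linear system, encoded as pairs of
finitely supported sequences `(a, b) : (ℕ → ℕ) × (ℕ → ℕ)` where index `i`
(for `0 ≤ i < r`) corresponds to `a_{i+1}`, `b_{i+1}`. -/
def SolSet (p r m n : ℕ) : Set ((ℕ → ℕ) × (ℕ → ℕ)) :=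
  {ab | (∀ i, r ≤ i → ab.1 i = 0) ∧ (∀ i, r ≤ i → ab.2 i = 0) ∧
        (∀ i, ab.2 i ≤ 1) ∧
        2 * (∑ i ∈ Finset.range r, ab.1 i) + ∑ i ∈ Finset.range r, ab.2 i = n ∧
        ab.2 0 + ∑ i ∈ Finset.range r, (ab.1 i + ab.2 (i + 1)) * p ^ (i + 1) = m}

/-- `N_r(m,n)`, the number of solutions of the linear system. -/
noncomputable def Ncard (p r m n : ℕ) : ℕ := Nat.card (SolSet p r m n)

/-- The stable value `N(m,n)` (for `p ≥ 2` one has `p ^ (m+1) > m`, so `r = m + 1`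
is in the stable range), with the convention that it vanishes for negative arguments. -/
noncomputable def Nstab (p : ℕ) (m n : ℤ) : ℕ :=
  if 0 ≤ m ∧ 0 ≤ n then Ncard p (m.toNat + 1) m.toNat n.toNat else 0

/-
Proof idea: write `m = Σ_{j ∈ S} p^j` with `S = {1, …, 2t+1}`. Each digit `p^j`, `j ∈ S`, can be
produced either by `a_j = 1` (weight 2 in `n`) or by `b_{j+1} = 1` (weight 1 in `n`). Choosing the
set `A ⊆ S` of digits produced by an `a` gives a solution with `n = 2|A| + |S \ A| = |S| + |A|`,
and distinct `A` give distinct solutions. Taking `|A| = t + 1` yields `C(2t+1, t+1) = C(2t+1, t)`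
solutions of `n = 3t + 2`; the bound `C(2t+1, t) ≥ 2^t` is an induction via Pascal's rule.
-/

open Finset

theorem SolSet.finite (p r m n : ℕ) : (SolSet p r m n).Finite := by
  have hsub : SolSet p r m n ⊆ (fun q : (Fin r → Fin (n + 1)) × (Fin r → Fin 2) =>
      ((fun i => if h : i < r then (q.1 ⟨i, h⟩ : ℕ) else 0),
       (fun i => if h : i < r then (q.2 ⟨i, h⟩ : ℕ) else 0))) '' Set.univ := by
    rintro ⟨a, b⟩ ⟨ha, hb, hb1, hsum, -⟩
    have ha_le : ∀ i < r, a i ≤ n := fun i hi => by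
      have := single_le_sum (fun j _ => Nat.zero_le (a j)) (mem_range.mpr hi)
      simp only at hsum
      omega
    refine ⟨(fun i => ⟨a i, Nat.lt_succ_of_le (ha_le i i.2)⟩,
      fun i => ⟨b i, Nat.lt_succ_of_le (hb1 i)⟩), Set.mem_univ _, ?_⟩
    refine Prod.ext ?_ ?_ <;> funext i <;> by_cases h : i < r <;> simp only [h, ↓reduceDIte]
    · exact (ha i (not_lt.mp h)).symm
    · exact (hb i (not_lt.mp h)).symm
  exact (Set.finite_univ.image _).subset hsub

theorem Nstab_natCast (p m n : ℕ) : Nstab p m n = Ncard p (m + 1) m n := by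
  rw [Nstab, if_pos ⟨Int.natCast_nonneg m, Int.natCast_nonneg n⟩, Int.toNat_natCast,
    Int.toNat_natCast]

theorem two_pow_le_choose_two_mul_add_one (t : ℕ) : 2 ^ t ≤ (2 * t + 1).choose t := by
  induction t with
  | zero => simp
  | succ t ih =>
    calc 2 ^ (t + 1) ≤ (2 * t + 1).choose t + (2 * t + 1).choose (t + 1) := by
          rw [Nat.choose_symm_half, pow_succ]; omega
      _ = (2 * t + 2).choose (t + 1) := (Nat.choose_succ_succ' _ _).symm
      _ ≤ (2 * (t + 1) + 1).choose (t + 1) := Nat.choose_le_succ _ _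

theorem sum_range_ite_succ_mem {M : Type*} [AddCommMonoid M] {A : Finset ℕ} {r : ℕ}
    (hA : A ⊆ Ioc 0 r) (f : ℕ → M) :
    ∑ i ∈ range r, (if i + 1 ∈ A then f (i + 1) else 0) = ∑ j ∈ A, f j := by
  have h0 : 0 ∉ A := fun h => by simpa using hA h
  have hA' : A ⊆ range (r + 1) := fun j hj => mem_range.mpr (by have := mem_Ioc.mp (hA hj); omega)
  have := sum_ite_mem (range (r + 1)) A f
  rw [inter_eq_right.mpr hA', sum_range_succ'] at this
  simpa [h0] using this

def solOfSubset (S A : Finset ℕ) : (ℕ → ℕ) × (ℕ → ℕ) :=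
  (fun i => if i + 1 ∈ A then 1 else 0, fun j => if j ∈ S \ A then 1 else 0)

theorem solOfSubset_mem_solSet (p : ℕ) {r : ℕ} {S A : Finset ℕ} (hS : S ⊆ Ioo 0 r)
    (hA : A ⊆ S) : solOfSubset S A ∈ SolSet p r (∑ j ∈ S, p ^ j) (#S + #A) := by
  have hS' : S ⊆ Ioc 0 r := hS.trans Ioo_subset_Ioc_self
  have hlt : ∀ j ∈ S, 0 < j ∧ j < r := fun j hj => mem_Ioo.mp (hS hj)
  refine ⟨fun i hi => if_neg fun h => ?_, fun i hi => if_neg fun h => ?_, fun i => ?_, ?_, ?_⟩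
  · have := hlt _ (hA h); omega
  · have := hlt _ (mem_sdiff.mp h).1; omega
  · simp only [solOfSubset]; split <;> omega
  · have hSA : S \ A ⊆ range r := fun j hj => mem_range.mpr (hlt j (mem_sdiff.mp hj).1).2
    have hcard := card_sdiff_add_card_eq_card hA
    simp only [solOfSubset]
    rw [sum_range_ite_succ_mem (hA.trans hS') (fun _ => 1), sum_ite_mem,
      inter_eq_right.mpr hSA]
    simp only [sum_const, smul_eq_mul, mul_one]
    omega
  · have h0 : 0 ∉ S := fun h => by simpa using hlt 0 h
    have hdigit : ∀ i, ((solOfSubset S A).1 i + (solOfSubset S A).2 (i + 1)) * p ^ (i + 1)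
        = if i + 1 ∈ S then p ^ (i + 1) else 0 := fun i => by
      by_cases hiA : i + 1 ∈ A
      · simp [solOfSubset, hiA, hA hiA]
      · by_cases hiS : i + 1 ∈ S <;> simp [solOfSubset, hiA, hiS]
    simp only [sum_congr rfl fun i _ => hdigit i, sum_range_ite_succ_mem hS']
    simp [solOfSubset, h0]

theorem solOfSubset_injOn (S : Finset ℕ) (hS : 0 ∉ S) :
    Set.InjOn (solOfSubset S) {A | A ⊆ S} := by
  intro A hA B hB hAB
  ext j
  by_cases hj : j ∈ S
  · have hj0 : j - 1 + 1 = j := Nat.sub_add_cancel (Nat.pos_of_ne_zero fun h => hS (h ▸ hj))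
    have := congrFun (congrArg Prod.fst hAB) (j - 1)
    simp only [solOfSubset, hj0] at this
    split_ifs at this <;> simp_all
  · exact iff_of_false (fun h => hj (hA h)) (fun h => hj (hB h))

theorem choose_card_le_ncard (p : ℕ) {r : ℕ} {S : Finset ℕ} (hS : S ⊆ Ioo 0 r) (k : ℕ) :
    (#S).choose k ≤ Ncard p r (∑ j ∈ S, p ^ j) (#S + k) := by
  rw [Ncard, Nat.card_coe_set_eq, ← card_powersetCard, ← Set.ncard_coe_finset]
  refine Set.ncard_le_ncard_of_injOn (solOfSubset S) (fun A hA => ?_)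
    ((solOfSubset_injOn S fun h => by simpa using hS h).mono fun A hA => ?_) (SolSet.finite ..)
  · obtain ⟨hAS, rfl⟩ := mem_powersetCard.mp hA
    exact solOfSubset_mem_solSet p hS hAS
  · exact (mem_powersetCard.mp hA).1

theorem stmt16_general (p : ℕ) (hp : p.Prime) (t : ℕ) :
    2 ^ t ≤ Nat.choose (2 * t + 1) t ∧
    Nat.choose (2 * t + 1) t ≤
      Nstab p (∑ j ∈ Finset.Icc 1 (2 * t + 1), (p : ℤ) ^ j) ((3 * t + 2 : ℕ) : ℤ) := by
  refine ⟨two_pow_le_choose_two_mul_add_one t, ?_⟩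
  set M := ∑ j ∈ Icc 1 (2 * t + 1), p ^ j
  have hM : 2 * t + 1 ≤ M := by
    simpa using card_nsmul_le_sum (Icc 1 (2 * t + 1)) (p ^ ·) 1
      fun j _ => Nat.one_le_pow _ _ hp.pos
  have hS : Icc 1 (2 * t + 1) ⊆ Ioo 0 (M + 1) := fun j hj => by
    have := mem_Icc.mp hj; exact mem_Ioo.mpr (by omega)
  have hMZ : ∑ j ∈ Icc 1 (2 * t + 1), (p : ℤ) ^ j = (M : ℤ) := by push_cast [M]; rfl
  calc (2 * t + 1).choose t = (#(Icc 1 (2 * t + 1))).choose (t + 1) := by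
        rw [Nat.card_Icc, Nat.add_sub_cancel, Nat.choose_symm_half]
    _ ≤ Ncard p (M + 1) M (#(Icc 1 (2 * t + 1)) + (t + 1)) := choose_card_le_ncard p hS _
    _ = _ := by rw [hMZ, Nstab_natCast, Nat.card_Icc]; congr 1; omega

/-- for an odd prime `p` and `t ≥ 1`, with `m = Σ_{j=1}^{2t+1} p^j`, one has
`N(m, 3t+2) ≥ C(2t+1, t) ≥ 2^t`. -/
theorem stmt16 (p : ℕ) (hp : p.Prime) (hodd : Odd p) (t : ℕ) (ht : 1 ≤ t) :
    2 ^ t ≤ Nat.choose (2 * t + 1) t ∧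
    Nat.choose (2 * t + 1) t ≤
      Nstab p (∑ j ∈ Finset.Icc 1 (2 * t + 1), (p : ℤ) ^ j) ((3 * t + 2 : ℕ) : ℤ) :=
  stmt16_general p hp t
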